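/- arXiv:2208.05392 — 3 statements merged into one kernel-verified Lean document; each statement's English description precedes it below -/
import Mathlib

section
/- Let γ ∈ (0,1), L ∈ ℕ, and let y_j < y_{j−1} be two thresholds with y_{j−1} − y_j ≥ 2γ^L. Suppose G_L^{y_j} and G_L^{y_{j−1}} are approximations of the same function G satisfying the selective refinement bound |G(ω) − G_L^z(ω)| ≤ max(γ^L, |G_L^z(ω) − z|) almost surely, for z = y_j and z = y_{j−1}. Then almost surely {ω : G_L^{y_j}(ω) ≤ y_j} ⊆ {ω : G_L^{y_{j−1}}(ω) ≤ y_{j−1}}. -/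
open MeasureTheory

theorem stmt1 {Ω : Type*} [MeasurableSpace Ω] (μ : Measure Ω) [IsProbabilityMeasure μ]
    (G GLj GLj' : Ω → ℝ) (γ : ℝ) (hγ : γ ∈ Set.Ioo (0:ℝ) 1) (L : ℕ)
    (yj yj' : ℝ) (hlt : yj < yj') (hgap : yj' - yj ≥ 2 * γ ^ L)
    (herrj : ∀ᵐ ω ∂μ, |G ω - GLj ω| ≤ max (γ ^ L) |GLj ω - yj|)
    (herrj' : ∀ᵐ ω ∂μ, |G ω - GLj' ω| ≤ max (γ ^ L) |GLj' ω - yj'|) :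
    ∀ᵐ ω ∂μ, GLj ω ≤ yj → GLj' ω ≤ yj' := by
  filter_upwards [herrj, herrj'] with ω h1 h2 hle
  by_contra h
  push_neg at h
  rw [show |GLj ω - yj| = -(GLj ω - yj) from abs_of_nonpos (by linarith)] at h1
  rw [show |GLj' ω - yj'| = GLj' ω - yj' from abs_of_pos (by linarith)] at h2
  have hG1 := (abs_le.mp h1).2
  have hG2 := (abs_le.mp h2).1
  have hp : 0 < γ ^ L := pow_pos hγ.1 L
  rcases max_cases (γ ^ L) (-(GLj ω - yj)) with ⟨e, he⟩ | ⟨e, he⟩ <;>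
    rcases max_cases (γ ^ L) (GLj' ω - yj') with ⟨f, hf⟩ | ⟨f, hf⟩ <;>
      rw [e] at hG1 <;> rw [f] at hG2 <;> linarith
end

section
/- Let γ ∈ (0,1), let (ℓ_j)_{j=1}^K be levels, and let G_{ℓ} be approximations of a function G : Ω → ℝ satisfying |G(ω) − G_{ℓ}(ω)| ≤ γ^{ℓ} for all ω. Define thresholds by y_K = 0 and y_j = y_{j+1} + γ^{ℓ_j} + γ^{ℓ_{j+1}} for j = K−1, …, 1. Then for every j, {ω : G_{ℓ_{j+1}}(ω) ≤ y_{j+1}} ⊆ {ω : G_{ℓ_j}(ω) ≤ y_j}. -/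
theorem stmt2 {Ω : Type*} (G : Ω → ℝ) (Gl : ℕ → Ω → ℝ) (γ : ℝ)
    (hγ : γ ∈ Set.Ioo (0:ℝ) 1) (K : ℕ) (ℓ : ℕ → ℕ) (y : ℕ → ℝ)
    (herr : ∀ (l : ℕ) (ω : Ω), |G ω - Gl l ω| ≤ γ ^ l)
    (hyK : y K = 0)
    (hrec : ∀ j, 1 ≤ j → j < K → y j = y (j+1) + γ ^ (ℓ j) + γ ^ (ℓ (j+1))) :
    ∀ j, 1 ≤ j → j < K →
      {ω | Gl (ℓ (j+1)) ω ≤ y (j+1)} ⊆ {ω | Gl (ℓ j) ω ≤ y j} := by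
  intro j hj1 hjK ω hω
  simp only [Set.mem_setOf_eq] at *
  have h1 := abs_le.mp (herr (ℓ (j+1)) ω)
  have h2 := abs_le.mp (herr (ℓ j) ω)
  rw [hrec j hj1 hjK]
  linarith [h1.1, h2.2]
end

section
/- Let G, G_ℓ be random variables with |G − G_ℓ| ≤ γ^ℓ almost surely and suppose the cdf of G is Lipschitz with constant c_Lip. Let the thresholds y_ℓ = y_{ℓ+1} + γ^ℓ + γ^{ℓ+1}, y_K = 0, and suppose p_ℓ := ℙ(G_ℓ ≤ y_ℓ) > 0. Then ℙ(G_{ℓ−1} ≤ y_{ℓ−1}) − ℙ(G_ℓ ≤ y_ℓ) ≤ c_Lip·(2γ^{ℓ−1} + 2γ^ℓ), so the conditional probability ℙ(F_ℓ^{ML} | F_{ℓ−1}^{ML}) → 1 as ℓ → ∞. -/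
open MeasureTheory Filter

theorem stmt17 {Ω : Type*} [MeasurableSpace Ω] (μ : Measure Ω) [IsProbabilityMeasure μ]
    (G : Ω → ℝ) (Gl : ℕ → Ω → ℝ) (γ : ℝ) (hγ : γ ∈ Set.Ioo (0:ℝ) 1)
    (herr : ∀ l : ℕ, ∀ᵐ ω ∂μ, |G ω - Gl l ω| ≤ γ ^ l)
    (cLip : ℝ) (hcLip : 0 < cLip)
    (hLip : ∀ x1 x2 : ℝ,
      |(μ {ω | G ω ≤ x1}).toReal - (μ {ω | G ω ≤ x2}).toReal| ≤ cLip * |x1 - x2|)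
    (y : ℕ → ℝ)
    (hrec : ∀ l : ℕ, y l = y (l+1) + γ ^ l + γ ^ (l+1))
    (hy0 : Tendsto y atTop (nhds 0))
    (hpos : ∀ l : ℕ, 0 < μ {ω | Gl l ω ≤ y l})
    (hP : 0 < μ {ω | G ω ≤ 0}) :
    (∀ l : ℕ,
      (μ {ω | Gl l ω ≤ y l}).toReal - (μ {ω | Gl (l+1) ω ≤ y (l+1)}).toReal
        ≤ cLip * (2 * γ ^ l + 2 * γ ^ (l+1)))
    ∧ Tendsto
        (fun l => (μ {ω | Gl (l+1) ω ≤ y (l+1)}).toReal / (μ {ω | Gl l ω ≤ y l}).toReal)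
        atTop (nhds 1) := by
  obtain ⟨hγ0, hγ1⟩ := hγ
  set P : ℕ → ℝ := fun l => (μ {ω | Gl l ω ≤ y l}).toReal with hPdef
  set Q : ℝ → ℝ := fun x => (μ {ω | G ω ≤ x}).toReal with hQdef
  -- upper sandwich
  have h1 : ∀ l, μ {ω | Gl l ω ≤ y l} ≤ μ {ω | G ω ≤ y l + γ ^ l} := by
    intro l
    refine measure_mono_ae ?_
    filter_upwards [herr l] with ω hω hmem
    have h' : G ω - Gl l ω ≤ γ ^ l := (abs_le.mp hω).2
    have hmem' : Gl l ω ≤ y l := hmem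
    show G ω ≤ y l + γ ^ l
    linarith
  -- lower sandwich
  have h2 : ∀ l, μ {ω | G ω ≤ y l - γ ^ l} ≤ μ {ω | Gl l ω ≤ y l} := by
    intro l
    refine measure_mono_ae ?_
    filter_upwards [herr l] with ω hω hmem
    have h' : -(γ ^ l) ≤ G ω - Gl l ω := (abs_le.mp hω).1
    have hmem' : G ω ≤ y l - γ ^ l := hmem
    show Gl l ω ≤ y l
    linarith
  have hkey : ∀ l, y (l+1) + γ ^ (l+1) = y l - γ ^ l := by
    intro l; have := hrec l; linarith
  -- nesting
  have h3 : ∀ l, μ {ω | Gl (l+1) ω ≤ y (l+1)} ≤ μ {ω | Gl l ω ≤ y l} := by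
    intro l
    calc μ {ω | Gl (l+1) ω ≤ y (l+1)} ≤ μ {ω | G ω ≤ y (l+1) + γ ^ (l+1)} := h1 (l+1)
    _ = μ {ω | G ω ≤ y l - γ ^ l} := by rw [hkey l]
    _ ≤ _ := h2 l
  have htR : ∀ s : Set Ω, μ s ≠ ⊤ := fun s => measure_ne_top μ s
  have hmono : ∀ {s t : Set Ω}, μ s ≤ μ t → (μ s).toReal ≤ (μ t).toReal := by
    intro s t h; exact ENNReal.toReal_mono (htR t) h
  -- y nonneg
  have hanti : Antitone y := by
    apply antitone_nat_of_succ_le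
    intro n
    have := hrec n
    nlinarith [pow_pos hγ0 n, pow_pos hγ0 (n+1)]
  have hynn : ∀ l, 0 ≤ y l - γ ^ l := by
    intro l
    have hy1 : 0 ≤ y (l+1) := by
      refine le_of_tendsto hy0 ?_
      filter_upwards [eventually_ge_atTop (l+1)] with n hn
      exact hanti hn
    have := hkey l
    nlinarith [pow_pos hγ0 (l+1)]
  -- P l ≥ c
  have hc : ∀ l, (μ {ω | G ω ≤ (0:ℝ)}).toReal ≤ P l := by
    intro l
    refine hmono (le_trans (measure_mono ?_) (h2 l))
    intro ω hω
    exact le_trans hω (hynn l)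
  set c : ℝ := (μ {ω | G ω ≤ (0:ℝ)}).toReal with hcdef
  have hc0 : 0 < c := ENNReal.toReal_pos hP.ne' (htR _)
  -- part 1
  have part1 : ∀ l : ℕ, P l - P (l+1) ≤ cLip * (2 * γ ^ l + 2 * γ ^ (l+1)) := by
    intro l
    have hu : P l ≤ Q (y l + γ ^ l) := hmono (h1 l)
    have hd : Q (y (l+1) - γ ^ (l+1)) ≤ P (l+1) := hmono (h2 (l+1))
    have hdist : (y l + γ ^ l) - (y (l+1) - γ ^ (l+1)) = 2 * γ ^ l + 2 * γ ^ (l+1) := by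
      have := hrec l; linarith
    have := hLip (y l + γ ^ l) (y (l+1) - γ ^ (l+1))
    rw [hdist] at this
    have habs : |(2:ℝ) * γ ^ l + 2 * γ ^ (l+1)| = 2 * γ ^ l + 2 * γ ^ (l+1) := by
      rw [abs_of_nonneg]; positivity
    rw [habs] at this
    have h4 : Q (y l + γ ^ l) - Q (y (l+1) - γ ^ (l+1)) ≤ cLip * (2 * γ ^ l + 2 * γ ^ (l+1)) :=
      le_trans (le_abs_self _) this
    simp only [hQdef] at h4 hu hd
    linarith
  refine ⟨part1, ?_⟩
  -- part 2
  have hPpos : ∀ l, 0 < P l := fun l => ENNReal.toReal_pos (hpos l).ne' (htR _)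
  have hub : ∀ l, P (l+1) / P l ≤ 1 := fun l =>
    div_le_one_of_le₀ (hmono (h3 l)) (hPpos l).le
  have hlb : ∀ l, 1 - cLip * (2 * γ ^ l + 2 * γ ^ (l+1)) / c ≤ P (l+1) / P l := by
    intro l
    have hD : 0 ≤ cLip * (2 * γ ^ l + 2 * γ ^ (l+1)) := by positivity
    have h5 : (P l - P (l+1)) / P l ≤ cLip * (2 * γ ^ l + 2 * γ ^ (l+1)) / c := by
      apply div_le_div₀ hD (part1 l) hc0 (hc l)
    have h6 : (P l - P (l+1)) / P l = 1 - P (l+1) / P l := by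
      rw [sub_div, div_self (hPpos l).ne']
    linarith
  have hγpow : Tendsto (fun l : ℕ => γ ^ l) atTop (nhds 0) :=
    tendsto_pow_atTop_nhds_zero_of_lt_one hγ0.le hγ1
  have hlow : Tendsto (fun l : ℕ => 1 - cLip * (2 * γ ^ l + 2 * γ ^ (l+1)) / c) atTop (nhds 1) := by
    have : Tendsto (fun l : ℕ => cLip * (2 * γ ^ l + 2 * γ ^ (l+1)) / c) atTop (nhds 0) := by
      have h7 : Tendsto (fun l : ℕ => γ ^ (l+1)) atTop (nhds 0) :=
        hγpow.comp (tendsto_add_atTop_nat 1)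
      have h9 := (((hγpow.const_mul 2).add (h7.const_mul 2)).const_mul cLip).div_const c
      norm_num at h9
      exact h9
    have h10 := (tendsto_const_nhds (α := ℕ) (f := atTop) (x := (1:ℝ))).sub this
    rw [sub_zero] at h10
    exact h10
  exact tendsto_of_tendsto_of_tendsto_of_le_of_le hlow tendsto_const_nhds hlb hub
end
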